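/- The image of the map ψ : (ℂ³)³ → ℂ⁷ defined by ψ(u₁,u₂,u₃) = (u₁·u₁, u₂·u₂, u₃·u₃, u₁·u₂, u₁·u₃, u₂·u₃, det[u₁ u₂ u₃]) is exactly the hypersurface {x ∈ ℂ⁷ : f(x) = 0}, where u·v denotes the standard (non-conjugated) bilinear dot product on ℂ³ and det[u₁ u₂ u₃] is the determinant of the 3×3 matrix with columns u₁,u₂,u₃. That is, a point (x₁,…,x₇) ∈ ℂ⁷ is of the form ψ(u₁,u₂,u₃) for some u₁,u₂,u₃ ∈ ℂ³ if and only if f(x₁,…,x₇) = 0. -/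

import Mathlib

/-!
Let `U` be the matrix with columns `u₁, u₂, u₃`. The first six coordinates of ψ are the entries
of the Gram matrix `Uᵀ U`, the last is `det U`, and `f(x) = det G(x) - x₇²` where `G(x)` is the
symmetric matrix with entries `x₁, …, x₆`. Hence `f ∘ ψ = det (Uᵀ U) - (det U)² = 0`.
Conversely, a symmetric bilinear form over `ℂ` has an orthogonal basis whose vectors have square
lengths `sᵢ²`, so every symmetric `G` factors as `Uᵀ U`. Then `(det U)² = det G = x₇²`, and
negating one row of `U` if necessary makes `det U = x₇`.
-/

open Matrix

theorem Matrix.IsSymm.exists_eq_transpose_mul_self {K n : Type*} [Field K] [IsAlgClosed K]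
    [Invertible (2 : K)] [Fintype n] [DecidableEq n] {A : Matrix n n K} (hA : A.IsSymm) :
    ∃ U : Matrix n n K, A = Uᵀ * U := by
  obtain ⟨v, hv⟩ := LinearMap.BilinForm.exists_orthogonal_basis
    (LinearMap.BilinForm.isSymm_iff.mp (Matrix.isSymm_toBilin'_iff_isSymm.mpr hA))
  let e : Fin (Module.finrank K (n → K)) ≃ n := Fintype.equivOfCardEq (by simp)
  let w : Module.Basis n K (n → K) := v.reindex e
  have hw : (Matrix.toBilin' A).IsOrthoᵢ w := fun i j hij => by
    simpa only [w, Function.onFun, Module.Basis.reindex_apply] using hv (e.symm.injective.ne hij)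
  set D := LinearMap.BilinForm.toMatrix w (Matrix.toBilin' A)
  have hD : D = diagonal (diag D) := by
    ext i j
    rcases eq_or_ne i j with rfl | hij
    · simp
    · simpa [D, LinearMap.BilinForm.toMatrix_apply, hij] using hw hij
  choose s hs using fun i => IsAlgClosed.exists_eq_mul_self (diag D i)
  refine ⟨diagonal s * w.toMatrix (Pi.basisFun K n), ?_⟩
  calc A = (w.toMatrix (Pi.basisFun K n))ᵀ * D * w.toMatrix (Pi.basisFun K n) := by
        rw [LinearMap.BilinForm.toMatrix_mul_basis_toMatrix,
          LinearMap.BilinForm.toMatrix_basisFun, LinearMap.BilinForm.toMatrix'_toBilin']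
    _ = _ := by
        rw [hD, funext hs, ← diagonal_mul_diagonal, transpose_mul, diagonal_transpose]
        simp only [Matrix.mul_assoc]

theorem Matrix.exists_eq_transpose_mul_self_and_det_eq {R n : Type*} [CommRing R]
    [NoZeroDivisors R] [Fintype n] [DecidableEq n] [Nonempty n] {A U : Matrix n n R}
    (hU : A = Uᵀ * U) {d : R} (hd : d ^ 2 = A.det) :
    ∃ V : Matrix n n R, A = Vᵀ * V ∧ V.det = d := by
  have hsq : U.det ^ 2 = d ^ 2 := by rw [hd, hU, det_mul, det_transpose, sq]
  rcases sq_eq_sq_iff_eq_or_eq_neg.mp hsq with h | h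
  · exact ⟨U, hU, h⟩
  obtain ⟨i₀⟩ := ‹Nonempty n›
  let J : Matrix n n R := diagonal fun i => if i = i₀ then -1 else 1
  have hJJ : Jᵀ * J = 1 := by
    rw [diagonal_transpose, diagonal_mul_diagonal, ← diagonal_one]
    congr 1
    funext i
    split_ifs <;> simp
  refine ⟨J * U, ?_, ?_⟩
  · rw [transpose_mul, Matrix.mul_assoc, ← Matrix.mul_assoc Jᵀ, hJJ, Matrix.one_mul, hU]
  · rw [det_mul, h, det_diagonal, Finset.prod_ite_eq']
    simp

def gramOfCoords (x : Fin 7 → ℂ) : Matrix (Fin 3) (Fin 3) ℂ :=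
  !![x 0, x 3, x 4; x 3, x 1, x 5; x 4, x 5, x 2]

lemma isSymm_gramOfCoords (x : Fin 7 → ℂ) : (gramOfCoords x).IsSymm := by
  ext i j
  fin_cases i <;> fin_cases j <;> rfl

lemma det_gramOfCoords (x : Fin 7 → ℂ) :
    (gramOfCoords x).det = x 0 * x 1 * x 2 + 2 * x 3 * x 4 * x 5
      - x 0 * x 5 ^ 2 - x 1 * x 4 ^ 2 - x 2 * x 3 ^ 2 := by
  simp only [gramOfCoords, det_fin_three, of_apply, cons_val', cons_val_zero, cons_val_one,
    cons_val, cons_val_fin_one]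
  ring

lemma exists_columns_iff_exists_gramOfCoords_eq (x : Fin 7 → ℂ) :
    (∃ u₁ u₂ u₃ : Fin 3 → ℂ,
      x 0 = ∑ i, u₁ i * u₁ i ∧ x 1 = ∑ i, u₂ i * u₂ i ∧ x 2 = ∑ i, u₃ i * u₃ i ∧
      x 3 = ∑ i, u₁ i * u₂ i ∧ x 4 = ∑ i, u₁ i * u₃ i ∧ x 5 = ∑ i, u₂ i * u₃ i ∧
      x 6 = Matrix.det (Matrix.of fun i j => ![u₁, u₂, u₃] j i)) ↔
    ∃ U : Matrix (Fin 3) (Fin 3) ℂ, gramOfCoords x = Uᵀ * U ∧ x 6 = U.det := by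
  constructor
  · rintro ⟨u₁, u₂, u₃, h₀, h₁, h₂, h₃, h₄, h₅, h₆⟩
    refine ⟨_, ?_, h₆⟩
    ext i j
    fin_cases i <;> fin_cases j <;>
      simp [gramOfCoords, mul_apply, h₀, h₁, h₂, h₃, h₄, h₅, mul_comm]
  · rintro ⟨U, hU, hdet⟩
    have hcols : (Matrix.of fun i j => ![fun k => U k 0, fun k => U k 1, fun k => U k 2] j i)
        = U := by
      ext i j
      fin_cases j <;> rfl
    have entry : ∀ i j, gramOfCoords x i j = ∑ k, U k i * U k j := fun i j => by
      rw [hU, mul_apply]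
      rfl
    exact ⟨fun k => U k 0, fun k => U k 1, fun k => U k 2, entry 0 0, entry 1 1, entry 2 2,
      entry 0 1, entry 0 2, entry 1 2, by rw [hcols, hdet]⟩

theorem image_of_psi_is_hypersurface (x : Fin 7 → ℂ) :
    (∃ u₁ u₂ u₃ : Fin 3 → ℂ,
      x 0 = ∑ i, u₁ i * u₁ i ∧
      x 1 = ∑ i, u₂ i * u₂ i ∧
      x 2 = ∑ i, u₃ i * u₃ i ∧
      x 3 = ∑ i, u₁ i * u₂ i ∧
      x 4 = ∑ i, u₁ i * u₃ i ∧
      x 5 = ∑ i, u₂ i * u₃ i ∧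
      x 6 = Matrix.det (Matrix.of fun i j => ![u₁, u₂, u₃] j i)) ↔
    x 0 * x 1 * x 2 + 2 * x 3 * x 4 * x 5
      - x 0 * x 5 ^ 2 - x 1 * x 4 ^ 2 - x 2 * x 3 ^ 2 - x 6 ^ 2 = 0 := by
  rw [exists_columns_iff_exists_gramOfCoords_eq, ← det_gramOfCoords, sub_eq_zero]
  constructor
  · rintro ⟨U, hU, hdet⟩
    rw [hU, hdet, det_mul, det_transpose, sq]
  · intro hdet
    obtain ⟨U, hU⟩ := (isSymm_gramOfCoords x).exists_eq_transpose_mul_self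
    obtain ⟨V, hV, hVdet⟩ := exists_eq_transpose_mul_self_and_det_eq hU hdet.symm
    exact ⟨V, hV, hVdet.symm⟩
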